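/- With rational coefficients, the alternative maker operator commutes with the singular coboundary operator: A ∘ δ = δ ∘ A on C^n(X;ℚ) for all n. -/

import Mathlib

open Finset

/-- The standard `n`-simplex as a topological space. -/
abbrev Simp (n : ℕ) : Type := ↥(stdSimplex ℝ (Fin (n+1)))

/-- Singular `n`-simplices of `X`. -/
abbrev Sing (n : ℕ) (X : Type*) [TopologicalSpace X] : Type _ := C(Simp n, X)

/-- The coordinate-permutation map `s̄` of the standard simplex induced by a
permutation `s`, sending barycentric coordinates `t` to `t ∘ s⁻¹`. -/
def permC {n : ℕ} (s : Equiv.Perm (Fin (n+1))) : C(Simp n, Simp n) where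
  toFun t := ⟨fun j => t.1 (s⁻¹ j),
    ⟨fun j => t.2.1 _, by simpa using (Equiv.sum_comp (s⁻¹) t.1).trans t.2.2⟩⟩
  continuous_toFun := by
    apply Continuous.subtype_mk
    exact continuous_pi fun j => (continuous_apply (s⁻¹ j)).comp continuous_subtype_val

/-- The affine map of standard simplices induced by a map of vertices `g`. -/
def vmap {m n : ℕ} (g : Fin (m+1) → Fin (n+1)) : C(Simp m, Simp n) where
  toFun t := ⟨fun j => ∑ k, if g k = j then t.1 k else 0,
    ⟨fun j => Finset.sum_nonneg fun k _ => by
        split_ifs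
        · exact t.2.1 k
        · exact le_rfl
      , by
      rw [Finset.sum_comm]
      simpa using t.2.2⟩⟩
  continuous_toFun := by
    apply Continuous.subtype_mk
    exact continuous_pi fun j => continuous_finset_sum _ fun k _ => by
      split_ifs
      · exact (continuous_apply k).comp continuous_subtype_val
      · exact continuous_const

/-- The `i`-th face inclusion of the standard simplex. -/
def faceMap {n : ℕ} (i : Fin (n+2)) : C(Simp n, Simp (n+1)) := vmap i.succAbove

/-- Singular `n`-cochains with coefficients in `G` (as `Hom` from the free
abelian group on singular simplices, i.e. functions on singular simplices). -/
abbrev SCochain (n : ℕ) (X : Type*) [TopologicalSpace X] (G : Type*) [AddCommGroup G] : Type _ :=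
  Sing n X → G

variable {X Y : Type*} [TopologicalSpace X] [TopologicalSpace Y]
variable {G : Type*} [AddCommGroup G]

/-- The singular coboundary operator. -/
def cob {n : ℕ} (α : SCochain n X G) : SCochain (n+1) X G :=
  fun σ => ∑ i : Fin (n+2), (-1 : ℤ)^(i : ℕ) • α (σ.comp (faceMap i))

/-- A cochain is alternative (oriented) if permuting the vertices of a singular
simplex multiplies its value by the sign of the permutation. -/
def IsAlt {n : ℕ} (α : SCochain n X G) : Prop :=
  ∀ (σ : Sing n X) (s : Equiv.Perm (Fin (n+1))),
    α (σ.comp (permC s)) = (Equiv.Perm.sign s : ℤ) • α σ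

/-- The alternative-maker (antisymmetrization) operator on rational cochains. -/
def Aop {n : ℕ} (α : SCochain n X ℚ) : SCochain n X ℚ :=
  fun σ => ((n+1).factorial : ℚ)⁻¹ *
    ∑ s : Equiv.Perm (Fin (n+1)), ((Equiv.Perm.sign s : ℤ) : ℚ) * α (σ.comp (permC s))

/-- The ordinary singular cup product. -/
def cup {p q : ℕ} (α : SCochain p X ℚ) (β : SCochain q X ℚ) : SCochain (p+q) X ℚ :=
  fun σ =>
    α (σ.comp (vmap (fun k : Fin (p+1) => Fin.castLE (by omega) k))) *
    β (σ.comp (vmap (fun k : Fin (q+1) => ⟨p + k, by omega⟩)))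

/-- The alternative (modified) cup product. -/
def cupA {p q : ℕ} (α : SCochain p X ℚ) (β : SCochain q X ℚ) : SCochain (p+q) X ℚ :=
  Aop (cup α β)

/-- Reindexing of cochains along an equality of degrees. -/
def ccast {m n : ℕ} (h : m = n) (α : SCochain m X G) : SCochain n X G :=
  fun σ => α (σ.comp (vmap (fun k : Fin (m+1) => Fin.cast (by omega) k)))

/-- The permutation of `{0,…,n-1}` induced by `s ∈ S_{n+1}` by deleting `i`
from the domain, `s i` from the range, and renumbering. -/
def inducedPerm {n : ℕ} (s : Equiv.Perm (Fin (n+2))) (i : Fin (n+2)) :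
    Equiv.Perm (Fin (n+1)) :=
  Equiv.removeNone ((finSuccEquiv' i).symm.trans (s.trans (finSuccEquiv' (s i))))

/-- Singular `n`-chains: the free abelian group on singular `n`-simplices. -/
abbrev SChain (n : ℕ) (X : Type*) [TopologicalSpace X] : Type _ := Sing n X →₀ ℤ

/-- The singular boundary operator. -/
noncomputable def bnd {n : ℕ} : SChain (n+1) X →+ SChain n X :=
  Finsupp.liftAddHom fun σ => zmultiplesHom _
    (∑ i : Fin (n+2), (-1 : ℤ)^(i : ℕ) • Finsupp.single (σ.comp (faceMap i)) (1 : ℤ))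

/-- The subgroup `U_n(X)` generated by the elements `σ∘s̄ − sign(s)·σ`. -/
noncomputable def Urel (n : ℕ) (X : Type*) [TopologicalSpace X] : AddSubgroup (SChain n X) :=
  AddSubgroup.closure {x | ∃ (σ : Sing n X) (s : Equiv.Perm (Fin (n+1))),
    x = Finsupp.single (σ.comp (permC s)) 1 - (Equiv.Perm.sign s : ℤ) • Finsupp.single σ 1}

/-- The pullback of cochains along a continuous map. -/
def pb (f : C(X, Y)) {n : ℕ} (α : SCochain n Y G) : SCochain n X G :=
  fun σ => α (f.comp σ)


-- auxiliary lemmas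

theorem permC_eq_vmap {n : ℕ} (s : Equiv.Perm (Fin (n+1))) : permC s = vmap s := by
  ext t j
  show t.1 (s⁻¹ j) = ∑ k, if s k = j then t.1 k else 0
  symm
  rw [Finset.sum_eq_single (s⁻¹ j)]
  · simp
  · intro k _ hk
    rw [if_neg]
    intro e
    exact hk (by rw [← e]; simp)
  · simp

theorem vmap_comp {l m n : ℕ} (g : Fin (m+1) → Fin (n+1)) (h : Fin (l+1) → Fin (m+1)) :
    (vmap g).comp (vmap h) = vmap (g ∘ h) := by
  ext t j
  show (∑ k, if g k = j then ∑ a, (if h a = k then t.1 a else 0) else 0)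
      = ∑ a, if g (h a) = j then t.1 a else 0
  have step1 : ∀ k : Fin (m+1), (if g k = j then ∑ a, (if h a = k then t.1 a else 0) else 0)
      = ∑ a, if g k = j then (if h a = k then t.1 a else 0) else 0 := by
    intro k; split_ifs <;> simp
  rw [Finset.sum_congr rfl (fun k _ => step1 k), Finset.sum_comm]
  refine Finset.sum_congr rfl (fun a _ => ?_)
  rw [Finset.sum_eq_single (h a)]
  · simp
  · intro k _ hk
    simp [Ne.symm hk]
  · simp

theorem succAbove_inducedPerm {n : ℕ} (s : Equiv.Perm (Fin (n+2))) (i : Fin (n+2)) (k : Fin (n+1)) :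
    (s i).succAbove (inducedPerm s i k) = s (i.succAbove k) := by
  obtain ⟨m, hm⟩ := Fin.exists_succAbove_eq
    (show s (i.succAbove k) ≠ s i from fun h => (Fin.succAbove_ne i k) (s.injective h))
  have h2 : ((finSuccEquiv' i).symm.trans (s.trans (finSuccEquiv' (s i)))) (some k) = some m := by
    simp only [Equiv.trans_apply, finSuccEquiv'_symm_some, ← hm, finSuccEquiv'_succAbove]
  have h3 := Equiv.removeNone_some _ ⟨m, h2⟩
  rw [h2] at h3
  rw [inducedPerm, Option.some_injective _ h3, hm]

theorem conj_eq {n : ℕ} (s : Equiv.Perm (Fin (n+2))) (i : Fin (n+2)) :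
    s = (Fin.cycleRange (s i))⁻¹ *
      (Equiv.Perm.decomposeFin.symm (0, inducedPerm s i)) * Fin.cycleRange i := by
  have hinv : ∀ (j : Fin (n+2)) (x : Fin (n+2)) (y : Fin (n+2)),
      Fin.cycleRange j y = x → (Fin.cycleRange j)⁻¹ x = y := by
    intro j x y hy; rw [← hy]; simp
  apply Equiv.ext
  intro x
  rcases eq_or_ne x i with hx | hx
  · subst hx
    rw [Equiv.Perm.mul_apply, Equiv.Perm.mul_apply, Fin.cycleRange_self,
      Equiv.Perm.decomposeFin_symm_apply_zero]
    exact (hinv _ 0 _ (Fin.cycleRange_self _)).symm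
  · obtain ⟨k, rfl⟩ := Fin.exists_succAbove_eq hx
    rw [Equiv.Perm.mul_apply, Equiv.Perm.mul_apply, Fin.cycleRange_succAbove,
      Equiv.Perm.decomposeFin_symm_apply_succ, Equiv.swap_self, Equiv.refl_apply]
    exact ((hinv (s i) ((inducedPerm s i k).succ) ((s i).succAbove (inducedPerm s i k))
      (Fin.cycleRange_succAbove _ _)).trans (succAbove_inducedPerm s i k)).symm

theorem sign_eq {n : ℕ} (s : Equiv.Perm (Fin (n+2))) (i : Fin (n+2)) :
    Equiv.Perm.sign s = (-1)^((i : ℕ) + ((s i) : ℕ)) * Equiv.Perm.sign (inducedPerm s i) := by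
  conv_lhs => rw [conj_eq s i]
  rw [map_mul, map_mul, Equiv.Perm.sign_inv, Fin.sign_cycleRange, Fin.sign_cycleRange,
    Equiv.Perm.decomposeFin.symm_sign, if_pos rfl, one_mul, pow_add]
  rw [mul_comm, ← mul_assoc]

/-- The decomposition `s ↦ (s i, inducedPerm s i)` as an equivalence. -/
def decompAt {n : ℕ} (i : Fin (n+2)) :
    Equiv.Perm (Fin (n+2)) ≃ Fin (n+2) × Equiv.Perm (Fin (n+1)) where
  toFun s := (s i, inducedPerm s i)
  invFun jt := (Fin.cycleRange jt.1)⁻¹ *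
      (Equiv.Perm.decomposeFin.symm (0, jt.2)) * Fin.cycleRange i
  left_inv s := (conj_eq s i).symm
  right_inv := by
    rintro ⟨j, t⟩
    have hinv : ∀ (p : Fin (n+2)) (x : Fin (n+2)) (y : Fin (n+2)),
        Fin.cycleRange p y = x → (Fin.cycleRange p)⁻¹ x = y := by
      intro p x y hy; rw [← hy]; simp
    set s := (Fin.cycleRange j)⁻¹ * (Equiv.Perm.decomposeFin.symm (0, t)) * Fin.cycleRange i
      with hs
    have hsi : s i = j := by
      rw [hs, Equiv.Perm.mul_apply, Equiv.Perm.mul_apply, Fin.cycleRange_self,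
        Equiv.Perm.decomposeFin_symm_apply_zero]
      exact hinv j 0 j (Fin.cycleRange_self _)
    have hsa : ∀ k, s (i.succAbove k) = j.succAbove (t k) := by
      intro k
      rw [hs, Equiv.Perm.mul_apply, Equiv.Perm.mul_apply, Fin.cycleRange_succAbove,
        Equiv.Perm.decomposeFin_symm_apply_succ, Equiv.swap_self, Equiv.refl_apply]
      exact hinv j ((t k).succ) (j.succAbove (t k)) (Fin.cycleRange_succAbove _ _)
    have ht : inducedPerm s i = t := by
      ext k
      have h1 := succAbove_inducedPerm s i k
      rw [hsi, hsa k] at h1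
      exact congrArg Fin.val (Fin.succAbove_right_injective h1)
    rw [Prod.mk.injEq]
    exact ⟨hsi, ht⟩

/-- the alternative maker operator commutes with the singular
coboundary with rational coefficients. -/
theorem statement10 {X : Type*} [TopologicalSpace X] {n : ℕ} (α : SCochain n X ℚ) :
    Aop (cob α) = cob (Aop α) := by
  funext σ
  have key : ∀ (i : Fin (n+2)) (s : Equiv.Perm (Fin (n+2))),
      (σ.comp (permC s)).comp (faceMap i)
        = (σ.comp (faceMap (s i))).comp (permC (inducedPerm s i)) := by
    intro i s
    rw [ContinuousMap.comp_assoc, ContinuousMap.comp_assoc, permC_eq_vmap, permC_eq_vmap,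
      faceMap, faceMap, vmap_comp, vmap_comp]
    exact congrArg (fun g => σ.comp (vmap g))
      (funext fun k => (succAbove_inducedPerm s i k).symm)
  have hsign : ∀ (i : Fin (n+2)) (s : Equiv.Perm (Fin (n+2))),
      ((Equiv.Perm.sign s : ℤ) : ℚ) * ((-1:ℚ)^(i:ℕ))
        = ((-1:ℚ)^((s i : ℕ))) * ((Equiv.Perm.sign (inducedPerm s i) : ℤ) : ℚ) := by
    intro i s
    have h1 : ((Equiv.Perm.sign s : ℤ))
        = (-1)^((i:ℕ)+((s i):ℕ)) * ((Equiv.Perm.sign (inducedPerm s i) : ℤ)) := by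
      rw [sign_eq s i]; push_cast; ring
    have h2 : ((Equiv.Perm.sign s : ℤ) : ℚ)
        = (-1)^((i:ℕ)+((s i):ℕ)) * ((Equiv.Perm.sign (inducedPerm s i) : ℤ) : ℚ) := by
      exact_mod_cast h1
    rw [h2, show ((-1:ℚ))^((i:ℕ)+((s i):ℕ)) * ((Equiv.Perm.sign (inducedPerm s i) : ℤ) : ℚ)
        * (-1)^(i:ℕ) = ((-1:ℚ)^((i:ℕ)+((s i):ℕ)+(i:ℕ)))
        * ((Equiv.Perm.sign (inducedPerm s i) : ℤ) : ℚ) by rw [pow_add _ ((i:ℕ)+((s i):ℕ))]; ring]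
    congr 1
    rw [show (i:ℕ)+((s i):ℕ)+(i:ℕ) = 2*(i:ℕ)+((s i):ℕ) by ring, pow_add, pow_mul]
    norm_num
  show ((Nat.factorial (n+1+1) : ℚ))⁻¹ * ∑ s : Equiv.Perm (Fin (n+2)),
      ((Equiv.Perm.sign s : ℤ) : ℚ) * (cob α) (σ.comp (permC s))
    = ∑ i : Fin (n+2), (-1 : ℤ)^(i : ℕ) • (((Nat.factorial (n+1) : ℚ))⁻¹ *
      ∑ t : Equiv.Perm (Fin (n+1)),
        ((Equiv.Perm.sign t : ℤ) : ℚ) * α ((σ.comp (faceMap i)).comp (permC t)))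
  set F : Fin (n+2) × Equiv.Perm (Fin (n+1)) → ℚ := fun p =>
    (-1:ℚ)^((p.1:ℕ)) * (((Equiv.Perm.sign p.2 : ℤ) : ℚ) *
      α ((σ.comp (faceMap p.1)).comp (permC p.2))) with hF
  have e1 : ∀ s : Equiv.Perm (Fin (n+2)),
      ((Equiv.Perm.sign s : ℤ) : ℚ) * (cob α) (σ.comp (permC s))
        = ∑ i : Fin (n+2), F (s i, inducedPerm s i) := by
    intro s
    show ((Equiv.Perm.sign s : ℤ) : ℚ) *
        (∑ i : Fin (n+2), (-1:ℤ)^(i:ℕ) • α ((σ.comp (permC s)).comp (faceMap i))) = _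
    rw [Finset.mul_sum]
    refine Finset.sum_congr rfl fun i _ => ?_
    rw [key i s, zsmul_eq_mul]
    push_cast
    rw [hF, ← mul_assoc, hsign i s, mul_assoc]
  rw [Finset.sum_congr rfl fun s _ => e1 s, Finset.sum_comm]
  have e2 : ∀ i : Fin (n+2),
      (∑ s : Equiv.Perm (Fin (n+2)), F (s i, inducedPerm s i)) = ∑ p, F p :=
    fun i => Equiv.sum_comp (decompAt i) F
  rw [Finset.sum_congr rfl fun i _ => e2 i, Finset.sum_const, Finset.card_univ,
    Fintype.card_fin, Fintype.sum_prod_type]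
  have hfac : ((Nat.factorial (n+1+1) : ℚ))⁻¹ * (n+2 : ℕ) = ((Nat.factorial (n+1) : ℚ))⁻¹ := by
    rw [Nat.factorial_succ (n+1)]
    have h1 : ((n+2 : ℕ) : ℚ) ≠ 0 := by positivity
    have h2 : ((Nat.factorial (n+1) : ℚ)) ≠ 0 := by
      exact_mod_cast Nat.factorial_ne_zero (n+1)
    push_cast
    field_simp
    ring
  rw [nsmul_eq_mul, ← mul_assoc, hfac, Finset.mul_sum]
  refine Finset.sum_congr rfl fun j _ => ?_
  rw [zsmul_eq_mul, hF]
  push_cast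
  rw [← Finset.mul_sum]
  ring
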